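/- Let j ≥ 2 and let (b_j,a_j) >lex (b_{j−1},a_{j−1}) >lex ... >lex (b_1,a_1) be pairs in ℕ² with b_i ≥ 1 for all 1 ≤ i ≤ j. Let c_1,...,c_{j−1} ∈ ℤ and P ∈ ℕ with |c_i| ≤ P for all 1 ≤ i ≤ j−1. Then for all natural numbers n ≥ max{1, N_j, M_j, 2·P}: |Σ_{i=1}^{j−1} c_i·n^{a_i}·b_i^n| < n^{a_j}·b_j^n, where N_j and M_j are defined from the monotonicity thresholds of the pairs as in the context. -/
import Mathlib


open scoped Classical

noncomputable section

namespace Koat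

/-! ### Formulas over polynomial atoms `p < q` -/

inductive Fml (V : Type*) where
  | lt  : MvPolynomial V ℤ → MvPolynomial V ℤ → Fml V
  | and : Fml V → Fml V → Fml V
  | or  : Fml V → Fml V → Fml V

namespace Fml

variable {V : Type*}

/-- A formula holds in a state `σ : V → ℤ`. -/
def holds (σ : V → ℤ) : Fml V → Prop
  | .lt p q  => MvPolynomial.eval σ p < MvPolynomial.eval σ q
  | .and f g => holds σ f ∧ holds σ g
  | .or f g  => holds σ f ∨ holds σ g

/-- Applying an update `η` to a formula (substituting `η v` for each variable `v`). -/
def subst (η : V → MvPolynomial V ℤ) : Fml V → Fml V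
  | .lt p q  => .lt (MvPolynomial.bind₁ η p) (MvPolynomial.bind₁ η q)
  | .and f g => .and (subst η f) (subst η g)
  | .or f g  => .or (subst η f) (subst η g)

/-- The variables occurring in a formula. -/
def vars : Fml V → Finset V
  | .lt p q  => p.vars ∪ q.vars
  | .and f g => vars f ∪ vars g
  | .or f g  => vars f ∪ vars g

/-- The list of atoms `(s₁, s₂)` (meaning `s₁ < s₂`) occurring in a formula. -/
def atoms : Fml V → List (MvPolynomial V ℤ × MvPolynomial V ℤ)
  | .lt p q  => [(p, q)]
  | .and f g => atoms f ++ atoms g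
  | .or f g  => atoms f ++ atoms g

end Fml

/-! ### Bounds -/

/-- The set `𝓑` of bounds: built from `ℕ ∪ {ω}`, variables, `+`, `·`, `k^{·}`. -/
inductive Bnd (V : Type*) where
  | const : ℕ∞ → Bnd V
  | var : V → Bnd V
  | add : Bnd V → Bnd V → Bnd V
  | mul : Bnd V → Bnd V → Bnd V
  | exp : ℕ → Bnd V → Bnd V

/-- `k ^ e` for `e : ℕ∞`. -/
def epow (k : ℕ) (e : ℕ∞) : ℕ∞ := if e = ⊤ then ⊤ else ((k ^ e.toNat : ℕ) : ℕ∞)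

namespace Bnd

variable {V : Type*}

/-- Evaluation of a bound in a (non-negative) state, with values in `ℕ ∪ {ω}`. -/
def eval (σ : V → ℕ) : Bnd V → ℕ∞
  | .const c => c
  | .var v => (σ v : ℕ∞)
  | .add b₁ b₂ => eval σ b₁ + eval σ b₂
  | .mul b₁ b₂ => eval σ b₁ * eval σ b₂
  | .exp k b => epow k (eval σ b)

/-- `b [v / f v | v ∈ PV]`: substitute the bound `f v` for every program variable `v ∈ PV`. -/
def substOn (PV : Set V) (f : V → Bnd V) : Bnd V → Bnd V
  | .const c => .const c
  | .var v => if v ∈ PV then f v else .var v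
  | .add b₁ b₂ => .add (substOn PV f b₁) (substOn PV f b₂)
  | .mul b₁ b₂ => .mul (substOn PV f b₁) (substOn PV f b₂)
  | .exp k b => .exp k (substOn PV f b)

end Bnd

/-- The sum of a list of bounds. -/
def bndSum {V : Type*} (l : List (Bnd V)) : Bnd V := l.foldr Bnd.add (Bnd.const 0)

/-! ### Integer programs -/

/-- A transition `(ℓ, φ, η, ℓ')`. -/
structure Trans (L V : Type*) where
  src : L
  guard : Fml V
  update : V → MvPolynomial V ℤ
  tgt : L

/-- A configuration `(ℓ, σ)`. -/
abbrev Config (L V : Type*) := L × (V → ℤ)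

/-- The evaluation step `(ℓ, σ) →_t (ℓ', σ')`: program variables are updated by `t.update`,
temporary variables (those outside `PV`) get arbitrary values. -/
def Step {L V : Type*} (PV : Set V) (t : Trans L V) (c c' : Config L V) : Prop :=
  c.1 = t.src ∧ c'.1 = t.tgt ∧ t.guard.holds c.2 ∧
    ∀ v ∈ PV, c'.2 v = MvPolynomial.eval c.2 (t.update v)

/-- `→_S`, the union of `→_t` over `t ∈ S`. -/
def StepAny {L V : Type*} (PV : Set V) (S : Finset (Trans L V)) :
    Config L V → Config L V → Prop :=
  fun c c' => ∃ t ∈ S, Step PV t c c'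

/-- `k`-fold composition of a relation. -/
def relPow {α : Type*} (R : α → α → Prop) : ℕ → α → α → Prop
  | 0 => Eq
  | n + 1 => Relation.Comp (relPow R n) R

/-- `→*_S ∘ →_t`. -/
def starThen {L V : Type*} (PV : Set V) (S : Finset (Trans L V)) (t : Trans L V) :
    Config L V → Config L V → Prop :=
  Relation.Comp (Relation.ReflTransGen (StepAny PV S)) (Step PV t)

/-- `|σ|`, the state of absolute values. -/
def absState {V : Type*} (σ : V → ℤ) : V → ℕ := fun v => (σ v).natAbs

/-- `RB` is a global runtime bound for the program `(PV, L, ℓ₀, T)`. -/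
def IsGlobalRB {L V : Type*} (PV : Set V) (ℓ₀ : L) (T : Finset (Trans L V))
    (RB : Trans L V → Bnd V) : Prop :=
  ∀ t ∈ T, ∀ σ₀ : V → ℤ,
    (⨆ k ∈ {k : ℕ | ∃ c' : Config L V, relPow (starThen PV T t) k (ℓ₀, σ₀) c'}, (k : ℕ∞))
      ≤ (RB t).eval (absState σ₀)

/-- `SB` is a size bound for the program `(PV, L, ℓ₀, T)`. -/
def IsSizeBound {L V : Type*} (PV : Set V) (ℓ₀ : L) (T : Finset (Trans L V))
    (SB : Trans L V → V → Bnd V) : Prop :=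
  ∀ t ∈ T, ∀ v ∈ PV, ∀ σ₀ : V → ℤ,
    (⨆ s ∈ {s : ℕ | ∃ c' : Config L V, starThen PV T t (ℓ₀, σ₀) c' ∧ s = (c'.2 v).natAbs},
      (s : ℕ∞)) ≤ (SB t v).eval (absState σ₀)

/-- The entry transitions `E_{T'}`. -/
def entrySet {L V : Type*} (T T' : Finset (Trans L V)) : Set (Trans L V) :=
  {t | t ∈ T ∧ t ∉ T' ∧ ∃ t' ∈ T', t'.src = t.tgt}

/-- `RB` is a local runtime bound for `T'gt` w.r.t. `T'` in the program `(PV, L, ℓ₀, T)`. -/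
def IsLocalRB {L V : Type*} (PV : Set V) (ℓ₀ : L) (T T'gt T' : Finset (Trans L V))
    (RB : Trans L V → Bnd V) : Prop :=
  ∀ t ∈ T'gt, ∀ r ∈ entrySet T T', ∀ σ : V → ℤ,
    (⨆ k ∈ {k : ℕ | ∃ (σ₀ : V → ℤ) (c' : Config L V),
        starThen PV T r (ℓ₀, σ₀) (r.tgt, σ) ∧ relPow (starThen PV T' t) k (r.tgt, σ) c'},
      (k : ℕ∞)) ≤ (RB r).eval (absState σ)

/-- Chaining two transitions: `t₁ ⋆ t₂`. -/
def chain2 {L V : Type*} (t₁ t₂ : Trans L V) : Trans L V :=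
  ⟨t₁.src, (t₁.guard).and (t₂.guard.subst t₁.update),
    fun v => MvPolynomial.bind₁ t₁.update (t₂.update v), t₂.tgt⟩

/-- Chaining a (nonempty) list of transitions `t₁ ⋆ ⋯ ⋆ tₙ` (with a default for `[]`). -/
def chainFold {L V : Type*} (dflt : Trans L V) : List (Trans L V) → Trans L V
  | [] => dflt
  | t :: ts => ts.foldl chain2 t

/-- The composed evaluation relation `→_{t₁} ∘ ⋯ ∘ →_{tₙ}`. -/
def stepsList {L V : Type*} (PV : Set V) : List (Trans L V) → Config L V → Config L V → Prop
  | [] => Eq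
  | t :: ts => Relation.Comp (Step PV t) (stepsList PV ts)

/-! ### Twn-loops -/

/-- An update `η` as a function on states `ℤ^d → ℤ^d`. -/
def updFun {d : ℕ} (η : Fin d → MvPolynomial (Fin d) ℤ) (σ : Fin d → ℤ) : Fin d → ℤ :=
  fun i => MvPolynomial.eval σ (η i)

/-- `η` is triangular weakly non-linear with data `c`, `p`:
`η xᵢ = cᵢ·xᵢ + pᵢ` with `pᵢ ∈ ℤ[x_{i+1},…,x_d]`. -/
def IsTriangular {d : ℕ} (η : Fin d → MvPolynomial (Fin d) ℤ) (c : Fin d → ℤ)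
    (p : Fin d → MvPolynomial (Fin d) ℤ) : Prop :=
  ∀ i, η i = MvPolynomial.C (c i) * MvPolynomial.X i + p i ∧ ∀ j ∈ (p i).vars, i < j

/-- Triangular weakly non-linear update. -/
def IsTWN {d : ℕ} (η : Fin d → MvPolynomial (Fin d) ℤ) : Prop :=
  ∃ c p, IsTriangular η c p

/-- Triangular weakly non-linear update with non-negative coefficients. -/
def IsTNN {d : ℕ} (η : Fin d → MvPolynomial (Fin d) ℤ) : Prop :=
  ∃ c p, IsTriangular η c p ∧ ∀ i, 0 ≤ c i

/-- `(b₁,a₁) >_lex (b₂,a₂)`. -/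
def lexGt (b₁ a₁ b₂ a₂ : ℕ) : Prop := b₂ < b₁ ∨ (b₁ = b₂ ∧ a₂ < a₁)

/-- The set of all valid `k`-monotonicity thresholds of `(b₁,a₁)` and `(b₂,a₂)`. -/
def mthSet (k b₁ a₁ b₂ a₂ : ℕ) : Set ℕ :=
  {n₀ | ∀ n ≥ n₀, k * (n ^ a₂ * b₂ ^ n) < n ^ a₁ * b₁ ^ n}

/-- The `k`-monotonicity threshold of `(b₁,a₁)` and `(b₂,a₂)` (the smallest member of
`mthSet`, when it exists). -/
def mth (k b₁ a₁ b₂ a₂ : ℕ) : ℕ := sInf (mthSet k b₁ a₁ b₂ a₂)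

/-- `M_j` as in the paper. -/
def Mdef (b a : ℕ → ℕ) (j : ℕ) : ℕ :=
  if b j = b (j - 1) then 0 else mth 1 (b j) (a j) (b (j - 1)) (a (j - 1) + 1)

/-- `N_j` as in the paper. -/
def Ndef (b a : ℕ → ℕ) (j : ℕ) : ℕ :=
  if j = 2 then 1
  else if j = 3 then mth 1 (b 2) (a 2) (b 1) (a 1)
  else
    max ((Finset.Icc 1 (j - 3)).sup fun i => mth 1 (b (j - 2)) (a (j - 2)) (b i) (a i))
      (mth (j - 2) (b (j - 1)) (a (j - 1)) (b (j - 2)) (a (j - 2)))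

/-- The over-approximation `⊔ {p j | j ∈ s}`: each monomial gets the maximal absolute value
of its coefficients in the `p j`. -/
def sqcupF {d : ℕ} {ι : Type*} (s : Finset ι) (p : ι → MvPolynomial (Fin d) ℤ) :
    MvPolynomial (Fin d) ℤ :=
  ∑ m ∈ s.biUnion fun j => (p j).support,
    MvPolynomial.monomial m (((s.sup fun j => ((p j).coeff m).natAbs : ℕ) : ℤ))

/-- Normalized poly-exponential expressions, as finite (formal) sums of
`p · n^a · b^n` with `p ∈ ℚ[x₁,…,x_d]`. -/
abbrev NPE (d : ℕ) := List (MvPolynomial (Fin d) ℚ × ℕ × ℕ)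

/-- The value of a normalized poly-exponential expression at `(e, n)`. -/
def evalNPE {d : ℕ} (l : NPE d) (e : Fin d → ℤ) (n : ℕ) : ℚ :=
  (l.map fun tr =>
    MvPolynomial.eval (fun i => (e i : ℚ)) tr.1 * (n : ℚ) ^ tr.2.1 * (tr.2.2 : ℚ) ^ n).sum


open Filter in
lemma mthSet_nonempty (k b₁ a₁ b₂ a₂ : ℕ) (hb₂ : 1 ≤ b₂) (h : lexGt b₁ a₁ b₂ a₂) :
    (mthSet k b₁ a₁ b₂ a₂).Nonempty := by
  rcases h with h | ⟨hbe, h⟩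
  · -- b₂ < b₁
    have hb₁ : (0:ℝ) < (b₁:ℝ) := by
      have : 0 < b₁ := by omega
      exact_mod_cast this
    have hr : ‖(b₂:ℝ)/(b₁:ℝ)‖ < 1 := by
      rw [Real.norm_eq_abs, abs_of_nonneg (by positivity), div_lt_one hb₁]
      exact_mod_cast h
    have hsum := summable_norm_pow_mul_geometric_of_norm_lt_one (R := ℝ) a₂ hr
    have htend := hsum.tendsto_atTop_zero
    have hev : ∀ᶠ m : ℕ in atTop, ‖(m:ℝ)^a₂ * ((b₂:ℝ)/(b₁:ℝ))^m‖ < 1/((k:ℝ)+1) :=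
      htend.eventually (gt_mem_nhds (by positivity))
    obtain ⟨N, hN⟩ := Filter.eventually_atTop.1 hev
    refine ⟨max N 1, fun m hm => ?_⟩
    have hm1 : 1 ≤ m := le_trans (le_max_right N 1) hm
    have hmN : N ≤ m := le_trans (le_max_left N 1) hm
    have h1 := hN m hmN
    have hb₁n : (0:ℝ) < (b₁:ℝ)^m := by positivity
    have h2 : (m:ℝ)^a₂ * ((b₂:ℝ)/(b₁:ℝ))^m < 1/((k:ℝ)+1) :=
      lt_of_le_of_lt (le_abs_self _) h1
    have h3 : ((m:ℝ)^a₂ * (b₂:ℝ)^m) / (b₁:ℝ)^m < 1/((k:ℝ)+1) := by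
      rw [div_pow] at h2
      rw [mul_div_assoc]
      exact h2
    have h4 : ((m:ℝ)^a₂ * (b₂:ℝ)^m) * ((k:ℝ)+1) < 1 * (b₁:ℝ)^m :=
      (div_lt_div_iff₀ hb₁n (by positivity)).1 h3
    have h5 : (k:ℝ) * ((m:ℝ)^a₂ * (b₂:ℝ)^m) < (b₁:ℝ)^m := by
      have hy : (0:ℝ) ≤ (m:ℝ)^a₂ * (b₂:ℝ)^m := by positivity
      nlinarith
    have h6 : k * (m ^ a₂ * b₂ ^ m) < b₁ ^ m := by exact_mod_cast h5
    have h7 : b₁ ^ m ≤ m ^ a₁ * b₁ ^ m :=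
      Nat.le_mul_of_pos_left _ (pow_pos hm1 _)
    exact lt_of_lt_of_le h6 h7
  · -- b₁ = b₂, a₂ < a₁
    refine ⟨k + 1, fun m hm => ?_⟩
    have hm1 : 1 ≤ m := by omega
    have hpos : 0 < b₂ ^ m := pow_pos hb₂ m
    have h1 : k * m ^ a₂ < m ^ a₁ := by
      calc k * m ^ a₂ < m * m ^ a₂ :=
            mul_lt_mul_of_pos_right (by omega) (pow_pos hm1 _)
        _ = m ^ (a₂ + 1) := (pow_succ' m a₂).symm
        _ ≤ m ^ a₁ := Nat.pow_le_pow_right hm1 (by omega)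
    calc k * (m ^ a₂ * b₂ ^ m) = (k * m ^ a₂) * b₂ ^ m := by ring
      _ < m ^ a₁ * b₂ ^ m := mul_lt_mul_of_pos_right h1 hpos
      _ = m ^ a₁ * b₁ ^ m := by rw [hbe]

lemma mth_spec (k b₁ a₁ b₂ a₂ : ℕ) (hb₂ : 1 ≤ b₂) (h : lexGt b₁ a₁ b₂ a₂)
    {n : ℕ} (hn : mth k b₁ a₁ b₂ a₂ ≤ n) :
    k * (n ^ a₂ * b₂ ^ n) < n ^ a₁ * b₁ ^ n :=
  Nat.sInf_mem (mthSet_nonempty k b₁ a₁ b₂ a₂ hb₂ h) n hn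

lemma lexGt_trans {b₁ a₁ b₂ a₂ b₃ a₃ : ℕ} (h : lexGt b₁ a₁ b₂ a₂)
    (h' : lexGt b₂ a₂ b₃ a₃) : lexGt b₁ a₁ b₃ a₃ := by
  unfold lexGt at *; omega

lemma lexGt_chain (b a : ℕ → ℕ) (j : ℕ)
    (hchain : ∀ i, 1 ≤ i → i < j → lexGt (b (i + 1)) (a (i + 1)) (b i) (a i)) :
    ∀ m i, 1 ≤ i → i < m → m ≤ j → lexGt (b m) (a m) (b i) (a i) := by
  intro m
  induction m with
  | zero => exact fun i h1 h2 _ => absurd h2 (by omega)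
  | succ m ih =>
    intro i h1 him hmj
    rcases Nat.lt_succ_iff_lt_or_eq.mp him with hlt | rfl
    · exact lexGt_trans (hchain m (by omega) (by omega)) (ih i h1 hlt (by omega))
    · exact hchain i h1 (by omega)

lemma main_nat (j : ℕ) (hj : 2 ≤ j) (b a : ℕ → ℕ) (P : ℕ)
    (hchain : ∀ i, 1 ≤ i → i < j → lexGt (b (i + 1)) (a (i + 1)) (b i) (a i))
    (hb : ∀ i, 1 ≤ i → i ≤ j → 1 ≤ b i)
    (n : ℕ) (hn1 : 1 ≤ n) (hnN : Ndef b a j ≤ n) (hnM : Mdef b a j ≤ n)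
    (hnP : 2 * P ≤ n) :
    P * ∑ i ∈ Finset.Icc 1 (j - 1), n ^ a i * b i ^ n < n ^ a j * b j ^ n := by
  have hbj1 : 1 ≤ b (j - 1) := hb (j - 1) (by omega) (by omega)
  have hT1 : 0 < n ^ a (j - 1) * b (j - 1) ^ n :=
    Nat.mul_pos (pow_pos hn1 _) (pow_pos hbj1 n)
  have hchain_j : lexGt (b j) (a j) (b (j - 1)) (a (j - 1)) := by
    have := hchain (j - 1) (by omega) (by omega)
    rwa [Nat.sub_add_cancel (by omega)] at this
  -- Step: n * t(j-1) ≤ t(j)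
  have hstep : n * (n ^ a (j - 1) * b (j - 1) ^ n) ≤ n ^ a j * b j ^ n := by
    by_cases hbe : b j = b (j - 1)
    · have haj : a (j - 1) < a j := by
        rcases hchain_j with hlt | ⟨_, hlt⟩ <;> omega
      calc n * (n ^ a (j - 1) * b (j - 1) ^ n)
          = n ^ (a (j - 1) + 1) * b (j - 1) ^ n := by ring
        _ ≤ n ^ a j * b (j - 1) ^ n :=
            Nat.mul_le_mul_right _ (Nat.pow_le_pow_right hn1 (by omega))
        _ = n ^ a j * b j ^ n := by rw [hbe]
    · have hblt : b (j - 1) < b j := by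
        rcases hchain_j with hlt | ⟨heq, _⟩
        · exact hlt
        · exact absurd heq hbe
      have hM : Mdef b a j = mth 1 (b j) (a j) (b (j - 1)) (a (j - 1) + 1) := if_neg hbe
      have hsp := mth_spec 1 (b j) (a j) (b (j - 1)) (a (j - 1) + 1) hbj1
        (Or.inl hblt) (n := n) (by rw [← hM]; exact hnM)
      rw [one_mul] at hsp
      calc n * (n ^ a (j - 1) * b (j - 1) ^ n)
          = n ^ (a (j - 1) + 1) * b (j - 1) ^ n := by ring
        _ ≤ n ^ a j * b j ^ n := le_of_lt hsp
  by_cases hP : P = 0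
  · subst hP
    simpa using Nat.mul_pos (pow_pos hn1 (a j)) (pow_pos (hb j (by omega) le_rfl) n)
  have hP1 : 1 ≤ P := by omega
  rcases eq_or_lt_of_le hj with hj2 | hj3
  · -- j = 2
    subst hj2
    simp only [show (2:ℕ) - 1 = 1 from rfl, Finset.Icc_self, Finset.sum_singleton]
    calc P * (n ^ a 1 * b 1 ^ n) < n * (n ^ a 1 * b 1 ^ n) :=
          mul_lt_mul_of_pos_right (by omega) hT1
      _ ≤ n ^ a 2 * b 2 ^ n := hstep
  · -- j ≥ 3
    have hSS : ∑ i ∈ Finset.Icc 1 (j - 1), n ^ a i * b i ^ n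
        < 2 * (n ^ a (j - 1) * b (j - 1) ^ n) := by
      rcases eq_or_lt_of_le (show 3 ≤ j by omega) with hj3' | hj4
      · -- j = 3
        have hj3'' : j = 3 := hj3'.symm
        subst hj3''
        have hN3 : Ndef b a 3 = mth 1 (b 2) (a 2) (b 1) (a 1) := rfl
        have hsp := mth_spec 1 (b 2) (a 2) (b 1) (a 1) (hb 1 le_rfl (by omega))
          (hchain 1 le_rfl (by omega)) (n := n) (by rw [← hN3]; exact hnN)
        rw [one_mul] at hsp
        have : Finset.Icc 1 (3 - 1) = {1, 2} := rfl
        rw [this, Finset.sum_insert (by decide), Finset.sum_singleton]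
        have : (3:ℕ) - 1 = 2 := rfl
        rw [this]
        calc n ^ a 1 * b 1 ^ n + n ^ a 2 * b 2 ^ n
            < n ^ a 2 * b 2 ^ n + n ^ a 2 * b 2 ^ n := Nat.add_lt_add_right hsp _
          _ = 2 * (n ^ a 2 * b 2 ^ n) := by ring
      · -- j ≥ 4
        obtain ⟨m, rfl⟩ : ∃ m, j = m + 4 := ⟨j - 4, by omega⟩
        have hN : Ndef b a (m + 4)
            = max ((Finset.Icc 1 (m + 1)).sup fun i =>
                mth 1 (b (m + 2)) (a (m + 2)) (b i) (a i))
              (mth (m + 2) (b (m + 3)) (a (m + 3)) (b (m + 2)) (a (m + 2))) := by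
          unfold Ndef
          rw [if_neg (by omega), if_neg (by omega)]
          rfl
        rw [hN, max_le_iff] at hnN
        obtain ⟨hnSup, hnMt⟩ := hnN
        have hA : ∀ i ∈ Finset.Icc 1 (m + 1),
            n ^ a i * b i ^ n ≤ n ^ a (m + 2) * b (m + 2) ^ n := by
          intro i hi
          rw [Finset.mem_Icc] at hi
          have hmth : mth 1 (b (m + 2)) (a (m + 2)) (b i) (a i) ≤ n :=
            le_trans (Finset.le_sup (f := fun i =>
              mth 1 (b (m + 2)) (a (m + 2)) (b i) (a i))
              (Finset.mem_Icc.2 ⟨hi.1, hi.2⟩)) hnSup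
          have hsp := mth_spec 1 (b (m + 2)) (a (m + 2)) (b i) (a i)
            (hb i hi.1 (by omega))
            (lexGt_chain b a (m + 4) hchain (m + 2) i hi.1 (by omega) (by omega))
            (n := n) hmth
          rw [one_mul] at hsp
          exact le_of_lt hsp
        have hB : ∑ i ∈ Finset.Icc 1 (m + 1), n ^ a i * b i ^ n
            ≤ (m + 1) * (n ^ a (m + 2) * b (m + 2) ^ n) := by
          calc ∑ i ∈ Finset.Icc 1 (m + 1), n ^ a i * b i ^ n
              ≤ (Finset.Icc 1 (m + 1)).card • (n ^ a (m + 2) * b (m + 2) ^ n) :=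
                Finset.sum_le_card_nsmul _ _ _ hA
            _ = (m + 1) * (n ^ a (m + 2) * b (m + 2) ^ n) := by
                simp [Nat.card_Icc, smul_eq_mul]
        have hC : (m + 2) * (n ^ a (m + 2) * b (m + 2) ^ n)
            < n ^ a (m + 3) * b (m + 3) ^ n :=
          mth_spec (m + 2) (b (m + 3)) (a (m + 3)) (b (m + 2)) (a (m + 2))
            (hb (m + 2) (by omega) (by omega))
            (by
              have := hchain (m + 2) (by omega) (by omega)
              exact this) (n := n) hnMt
        have hsplit1 : ∑ i ∈ Finset.Icc 1 (m + 4 - 1), n ^ a i * b i ^ n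
            = ∑ i ∈ Finset.Icc 1 (m + 2), n ^ a i * b i ^ n
              + n ^ a (m + 3) * b (m + 3) ^ n := by
          have h1 : m + 4 - 1 = m + 2 + 1 := by omega
          rw [h1, Finset.sum_Icc_succ_top (by omega)]
        have hsplit2 : ∑ i ∈ Finset.Icc 1 (m + 2), n ^ a i * b i ^ n
            = ∑ i ∈ Finset.Icc 1 (m + 1), n ^ a i * b i ^ n
              + n ^ a (m + 2) * b (m + 2) ^ n := by
          rw [Finset.sum_Icc_succ_top (by omega)]
        have hD : ∑ i ∈ Finset.Icc 1 (m + 2), n ^ a i * b i ^ n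
            < n ^ a (m + 3) * b (m + 3) ^ n := by
          rw [hsplit2]
          calc ∑ i ∈ Finset.Icc 1 (m + 1), n ^ a i * b i ^ n
                + n ^ a (m + 2) * b (m + 2) ^ n
              ≤ (m + 1) * (n ^ a (m + 2) * b (m + 2) ^ n)
                + n ^ a (m + 2) * b (m + 2) ^ n := Nat.add_le_add_right hB _
            _ = (m + 2) * (n ^ a (m + 2) * b (m + 2) ^ n) := by ring
            _ < n ^ a (m + 3) * b (m + 3) ^ n := hC
        have hj1 : m + 4 - 1 = m + 3 := by omega
        rw [hsplit1, hj1]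
        calc ∑ i ∈ Finset.Icc 1 (m + 2), n ^ a i * b i ^ n
              + n ^ a (m + 3) * b (m + 3) ^ n
            < n ^ a (m + 3) * b (m + 3) ^ n + n ^ a (m + 3) * b (m + 3) ^ n :=
              Nat.add_lt_add_right hD _
          _ = 2 * (n ^ a (m + 3) * b (m + 3) ^ n) := by ring
    calc P * ∑ i ∈ Finset.Icc 1 (j - 1), n ^ a i * b i ^ n
        < P * (2 * (n ^ a (j - 1) * b (j - 1) ^ n)) :=
          mul_lt_mul_of_pos_left hSS (by omega)
      _ = (2 * P) * (n ^ a (j - 1) * b (j - 1) ^ n) := by ring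
      _ ≤ n * (n ^ a (j - 1) * b (j - 1) ^ n) := Nat.mul_le_mul_right _ hnP
      _ ≤ n ^ a j * b j ^ n := hstep

/-- the key inequality `|Σ_{i=1}^{j-1} cᵢ·n^{aᵢ}·bᵢ^n| < n^{a_j}·b_j^n`
for all `n ≥ max {1, N_j, M_j, 2·P}`. -/
theorem dominating_addend (j : ℕ) (hj : 2 ≤ j) (b a : ℕ → ℕ) (c : ℕ → ℤ) (P : ℕ)
    (hchain : ∀ i, 1 ≤ i → i < j → lexGt (b (i + 1)) (a (i + 1)) (b i) (a i))
    (hb : ∀ i, 1 ≤ i → i ≤ j → 1 ≤ b i)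
    (hc : ∀ i, 1 ≤ i → i ≤ j - 1 → |c i| ≤ (P : ℤ))
    (n : ℕ) (hn : max (max 1 (Ndef b a j)) (max (Mdef b a j) (2 * P)) ≤ n) :
    |∑ i ∈ Finset.Icc 1 (j - 1), c i * (n : ℤ) ^ a i * (b i : ℤ) ^ n|
      < (n : ℤ) ^ a j * (b j : ℤ) ^ n := by
  rw [max_le_iff, max_le_iff, max_le_iff] at hn
  obtain ⟨⟨hn1, hnN⟩, hnM, hnP⟩ := hn
  have key := main_nat j hj b a P hchain hb n hn1 hnN hnM hnP
  calc |∑ i ∈ Finset.Icc 1 (j - 1), c i * (n : ℤ) ^ a i * (b i : ℤ) ^ n|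
      ≤ ∑ i ∈ Finset.Icc 1 (j - 1), |c i * (n : ℤ) ^ a i * (b i : ℤ) ^ n| :=
        Finset.abs_sum_le_sum_abs _ _
    _ ≤ ∑ i ∈ Finset.Icc 1 (j - 1), (P : ℤ) * ((n : ℤ) ^ a i * (b i : ℤ) ^ n) := by
        refine Finset.sum_le_sum fun i hi => ?_
        rw [Finset.mem_Icc] at hi
        have h1 : |c i| ≤ (P : ℤ) := hc i hi.1 hi.2
        have h2 : (0:ℤ) ≤ (n : ℤ) ^ a i * (b i : ℤ) ^ n := by positivity
        calc |c i * (n : ℤ) ^ a i * (b i : ℤ) ^ n|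
            = |c i| * ((n : ℤ) ^ a i * (b i : ℤ) ^ n) := by
              rw [abs_mul, abs_mul,
                abs_of_nonneg (by positivity : (0:ℤ) ≤ (n : ℤ) ^ a i),
                abs_of_nonneg (by positivity : (0:ℤ) ≤ ((b i : ℤ)) ^ n), mul_assoc]
          _ ≤ (P : ℤ) * ((n : ℤ) ^ a i * (b i : ℤ) ^ n) :=
              mul_le_mul_of_nonneg_right h1 h2
    _ = ((P * ∑ i ∈ Finset.Icc 1 (j - 1), n ^ a i * b i ^ n : ℕ) : ℤ) := by
        rw [Nat.cast_mul, Nat.cast_sum, Finset.mul_sum]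
        exact Finset.sum_congr rfl fun i _ => by push_cast; ring
    _ < (n : ℤ) ^ a j * (b j : ℤ) ^ n := by exact_mod_cast key

end Koat
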